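/- For a ∈ ℝ^L, max{a^T ζ : ‖ζ‖_∞ ≤ 1, ‖ζ‖_1 ≤ Γ} = ∑_{ℓ=1}^{⌊Γ⌋} |a|_{(ℓ)} + (Γ - ⌊Γ⌋)|a|_{(⌊Γ⌋+1)}, where |a|_{(1)} ≥ |a|_{(2)} ≥ … are the absolute values of the entries of a sorted in decreasing order (with the convention that terms with index > L are zero). -/

import Mathlib

/-!
Upper bound by weak LP duality: for any `c ≥ 0`, and `ζ` in the budgeted set,
`aᵀζ ≤ ∑ |a ℓ| |ζ ℓ| ≤ c Γ + ∑ (|a ℓ| - c)⁺`. Taking for `c` the `(⌊Γ⌋ + 1)`-st largest `|a ℓ|`,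
only the `⌊Γ⌋` largest entries contribute to the positive parts, and the right-hand side becomes
the claimed value. The greedy vector, `sign (a ℓ)` on the `⌊Γ⌋` largest entries and the fractional
part of `Γ` on the next one, attains it.
-/

open Finset

lemma abs_sign_cast_le_one (x : ℝ) : |(SignType.sign x : ℝ)| ≤ 1 := by
  cases SignType.sign x <;> simp

lemma sum_mul_le_mul_add_sum_posPart {ι : Type*} (s : Finset ι) (b t : ι → ℝ) {c Γ : ℝ}
    (hc : 0 ≤ c) (ht0 : ∀ i ∈ s, 0 ≤ t i) (ht1 : ∀ i ∈ s, t i ≤ 1) (htΓ : ∑ i ∈ s, t i ≤ Γ) :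
    ∑ i ∈ s, b i * t i ≤ c * Γ + ∑ i ∈ s, (b i - c)⁺ := by
  have hsplit : ∑ i ∈ s, b i * t i = c * ∑ i ∈ s, t i + ∑ i ∈ s, (b i - c) * t i := by
    rw [mul_sum, ← sum_add_distrib]
    exact sum_congr rfl fun i _ => by ring
  rw [hsplit]
  gcongr with i hi
  calc (b i - c) * t i ≤ (b i - c)⁺ * t i := by gcongr; exacts [ht0 i hi, le_posPart _]
    _ ≤ (b i - c)⁺ := mul_le_of_le_one_right (posPart_nonneg _) (ht1 i hi)

lemma sum_range_posPart_sub_of_antitone {b : ℕ → ℝ} (hb : Antitone b) {k N : ℕ} (hk : k ≤ N) :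
    ∑ n ∈ range N, (b n - b k)⁺ = ∑ n ∈ range k, (b n - b k) := by
  rw [← sum_range_add_sum_Ico _ hk]
  have hhead : ∀ n ∈ range k, (b n - b k)⁺ = b n - b k := fun n hn =>
    posPart_eq_self.2 (sub_nonneg.2 (hb (mem_range.1 hn).le))
  have htail : ∀ n ∈ Ico k N, (b n - b k)⁺ = 0 := fun n hn =>
    posPart_eq_zero.2 (sub_nonpos.2 (hb (mem_Ico.1 hn).1))
  rw [sum_congr rfl hhead, sum_eq_zero htail, add_zero]

noncomputable def budgetWeight (Γ : ℝ) (n : ℕ) : ℝ :=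
  if n < ⌊Γ⌋₊ then 1 else if n = ⌊Γ⌋₊ then Γ - ⌊Γ⌋₊ else 0

section budgetWeight

variable {Γ : ℝ}

lemma budgetWeight_nonneg (hΓ : 0 ≤ Γ) (n : ℕ) : 0 ≤ budgetWeight Γ n := by
  have := Nat.floor_le hΓ
  unfold budgetWeight
  split_ifs <;> linarith

lemma budgetWeight_le_one (n : ℕ) : budgetWeight Γ n ≤ 1 := by
  have := Nat.lt_floor_add_one Γ
  unfold budgetWeight
  split_ifs <;> linarith

lemma budgetWeight_of_floor_lt {n : ℕ} (hn : ⌊Γ⌋₊ < n) : budgetWeight Γ n = 0 := by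
  simp [budgetWeight, hn.ne', hn.not_gt]

lemma sum_range_budgetWeight_mul (f : ℕ → ℝ) {N : ℕ} (hN : ⌊Γ⌋₊ < N) :
    ∑ n ∈ range N, budgetWeight Γ n * f n = ∑ n ∈ range ⌊Γ⌋₊, f n + (Γ - ⌊Γ⌋₊) * f ⌊Γ⌋₊ := by
  rw [← sum_subset (range_subset_range.2 hN) fun n _ hn => by
    rw [budgetWeight_of_floor_lt (by simpa using hn), zero_mul], sum_range_succ]
  congr 1
  · exact sum_congr rfl fun n hn => by simp [budgetWeight, mem_range.1 hn]
  · simp [budgetWeight]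

lemma sum_range_budgetWeight_le (hΓ : 0 ≤ Γ) (N : ℕ) : ∑ n ∈ range N, budgetWeight Γ n ≤ Γ :=
  calc ∑ n ∈ range N, budgetWeight Γ n
      ≤ ∑ n ∈ range (N + ⌊Γ⌋₊ + 1), budgetWeight Γ n :=
        sum_le_sum_of_subset_of_nonneg (range_subset_range.2 (by omega))
          fun n _ _ => budgetWeight_nonneg hΓ n
    _ = Γ := by
        simpa using sum_range_budgetWeight_mul (Γ := Γ) (fun _ => 1) (N := N + ⌊Γ⌋₊ + 1) (by omega)

end budgetWeight

section sorted

variable {L : ℕ} (a : Fin L → ℝ) (σ : Equiv.Perm (Fin L))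

noncomputable def sortedAbs (n : ℕ) : ℝ := if h : n < L then |a (σ ⟨n, h⟩)| else 0

noncomputable def budgetMaximizer (Γ : ℝ) (ℓ : Fin L) : ℝ :=
  budgetWeight Γ (σ.symm ℓ) * SignType.sign (a ℓ)

lemma sortedAbs_nonneg (n : ℕ) : 0 ≤ sortedAbs a σ n := by
  unfold sortedAbs
  split <;> simp

lemma sortedAbs_antitone (hσ : ∀ i j : Fin L, i ≤ j → |a (σ j)| ≤ |a (σ i)|) :
    Antitone (sortedAbs a σ) := fun m n hmn => by
  by_cases hn : n < L
  · simpa [sortedAbs, hn, hmn.trans_lt hn] using hσ ⟨m, hmn.trans_lt hn⟩ ⟨n, hn⟩ hmn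
  · simpa [sortedAbs, hn] using sortedAbs_nonneg a σ m

lemma sum_comp_symm_eq_sum_range_sortedAbs (f : ℕ → ℝ → ℝ) :
    ∑ ℓ, f (σ.symm ℓ) |a ℓ| = ∑ n ∈ range L, f n (sortedAbs a σ n) := by
  rw [← Equiv.sum_comp σ, ← Fin.sum_univ_eq_sum_range (fun n => f n (sortedAbs a σ n))]
  simp [sortedAbs]

variable {Γ : ℝ}

lemma abs_budgetMaximizer_le_budgetWeight (hΓ : 0 ≤ Γ) (ℓ : Fin L) :
    |budgetMaximizer a σ Γ ℓ| ≤ budgetWeight Γ (σ.symm ℓ) := by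
  rw [budgetMaximizer, abs_mul, abs_of_nonneg (budgetWeight_nonneg hΓ _)]
  exact mul_le_of_le_one_right (budgetWeight_nonneg hΓ _) (abs_sign_cast_le_one _)

lemma sum_abs_budgetMaximizer_le (hΓ : 0 ≤ Γ) : ∑ ℓ, |budgetMaximizer a σ Γ ℓ| ≤ Γ :=
  calc ∑ ℓ, |budgetMaximizer a σ Γ ℓ|
      ≤ ∑ ℓ, budgetWeight Γ (σ.symm ℓ) :=
        sum_le_sum fun ℓ _ => abs_budgetMaximizer_le_budgetWeight a σ hΓ ℓ
    _ = ∑ n ∈ range L, budgetWeight Γ n :=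
        sum_comp_symm_eq_sum_range_sortedAbs a σ fun n _ => budgetWeight Γ n
    _ ≤ Γ := sum_range_budgetWeight_le hΓ L

lemma sum_mul_budgetMaximizer (hΓL : ⌊Γ⌋₊ ≤ L) :
    ∑ ℓ, a ℓ * budgetMaximizer a σ Γ ℓ
      = ∑ n ∈ range ⌊Γ⌋₊, sortedAbs a σ n + (Γ - ⌊Γ⌋₊) * sortedAbs a σ ⌊Γ⌋₊ :=
  calc ∑ ℓ, a ℓ * budgetMaximizer a σ Γ ℓ
      = ∑ ℓ, budgetWeight Γ (σ.symm ℓ) * |a ℓ| :=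
        sum_congr rfl fun ℓ _ => by rw [budgetMaximizer, ← self_mul_sign]; ring
    _ = ∑ n ∈ range (L + 1), budgetWeight Γ n * sortedAbs a σ n := by
        rw [sum_range_succ, sum_comp_symm_eq_sum_range_sortedAbs a σ fun n x => budgetWeight Γ n * x]
        simp [sortedAbs]
    _ = _ := sum_range_budgetWeight_mul _ (Nat.lt_succ_of_le hΓL)

lemma sum_mul_le_of_sum_abs_le (hσ : ∀ i j : Fin L, i ≤ j → |a (σ j)| ≤ |a (σ i)|)
    (hΓL : ⌊Γ⌋₊ ≤ L) {ζ : Fin L → ℝ} (hζ1 : ∀ ℓ, |ζ ℓ| ≤ 1) (hζΓ : ∑ ℓ, |ζ ℓ| ≤ Γ) :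
    ∑ ℓ, a ℓ * ζ ℓ
      ≤ ∑ n ∈ range ⌊Γ⌋₊, sortedAbs a σ n + (Γ - ⌊Γ⌋₊) * sortedAbs a σ ⌊Γ⌋₊ := by
  set c := sortedAbs a σ ⌊Γ⌋₊
  calc ∑ ℓ, a ℓ * ζ ℓ
      ≤ ∑ ℓ, |a ℓ| * |ζ ℓ| := sum_le_sum fun ℓ _ => abs_mul (a ℓ) (ζ ℓ) ▸ le_abs_self _
    _ ≤ c * Γ + ∑ ℓ, (|a ℓ| - c)⁺ :=
        sum_mul_le_mul_add_sum_posPart _ _ _ (sortedAbs_nonneg a σ _) (fun ℓ _ => abs_nonneg _)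
          (fun ℓ _ => hζ1 ℓ) hζΓ
    _ = c * Γ + ∑ n ∈ range ⌊Γ⌋₊, (sortedAbs a σ n - c) := by
        rw [sum_comp_symm_eq_sum_range_sortedAbs a σ fun _ x => (x - c)⁺,
          sum_range_posPart_sub_of_antitone (sortedAbs_antitone a σ hσ) hΓL]
    _ = _ := by
        rw [sum_sub_distrib, sum_const, card_range, nsmul_eq_mul]
        ring

end sorted

/-- Closed-form worst case over the Bertsimas–Sim budgeted uncertainty set:
if `σ` sorts the entries of `a` by decreasing absolute value, then the max of
`aᵀζ` over `{‖ζ‖_∞ ≤ 1, ‖ζ‖_1 ≤ Γ}` is the sum of the `⌊Γ⌋` largest `|a|`'s plus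
`(Γ - ⌊Γ⌋)` times the next one (terms beyond `L` being zero). -/
theorem stmt_19 (L : ℕ) (a : Fin L → ℝ) (Γ : ℝ) (hΓ0 : 0 ≤ Γ) (hΓL : Γ ≤ L)
    (σ : Equiv.Perm (Fin L)) (hσ : ∀ i j : Fin L, i ≤ j → |a (σ j)| ≤ |a (σ i)|)
    (b : ℕ → ℝ) (hb : ∀ n : ℕ, b n = if h : n < L then |a (σ ⟨n, h⟩)| else 0) :
    IsGreatest {x : ℝ | ∃ ζ : Fin L → ℝ,
        (∀ ℓ, |ζ ℓ| ≤ 1) ∧ (∑ ℓ, |ζ ℓ|) ≤ Γ ∧ x = ∑ ℓ, a ℓ * ζ ℓ}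
      ((∑ n ∈ Finset.range ⌊Γ⌋₊, b n) + (Γ - ⌊Γ⌋₊) * b ⌊Γ⌋₊) := by
  obtain rfl : b = sortedAbs a σ := funext hb
  have hfloor : ⌊Γ⌋₊ ≤ L := by exact_mod_cast (Nat.floor_le hΓ0).trans hΓL
  refine ⟨⟨budgetMaximizer a σ Γ, fun ℓ => ?_, sum_abs_budgetMaximizer_le a σ hΓ0,
    (sum_mul_budgetMaximizer a σ hfloor).symm⟩, ?_⟩
  · exact (abs_budgetMaximizer_le_budgetWeight a σ hΓ0 ℓ).trans (budgetWeight_le_one _)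
  · rintro _ ⟨ζ, hζ1, hζΓ, rfl⟩
    exact sum_mul_le_of_sum_abs_le a σ hσ hfloor hζ1 hζΓ
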